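/- For all integers k ≥ 1 and p ≥ 0, every finite nonempty set S ⊆ ℤ^k such that the subgraph of the k-dimensional mesh induced on S is connected and any two vertices of S are at graph distance at most 2p within the induced subgraph satisfies |S| ≤ f(k,p), the number of lattice points in the closed L¹-ball of radius p in ℤ^k. -/

import Mathlib

/-- `latticeBall k p` is the number of lattice points `x ∈ ℤ^k` with `∑ i, |x i| ≤ p`,
i.e. the cardinality of the closed L¹-ball `B_k(p)` centered at a lattice point. -/
noncomputable def latticeBall (k p : ℕ) : ℕ :=
  Set.ncard {x : Fin k → ℤ | ∑ i, |x i| ≤ (p : ℤ)}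

/-- The `k`-dimensional mesh: the simple graph on `ℤ^k` where two points are adjacent
iff they are at L¹-distance exactly `1`. -/
def mesh (k : ℕ) : SimpleGraph (Fin k → ℤ) where
  Adj x y := ∑ i, |x i - y i| = 1
  symm := by
    constructor
    intro x y h
    have e : ∀ i ∈ Finset.univ, |y i - x i| = |x i - y i| := fun i _ => abs_sub_comm _ _
    rw [Finset.sum_congr rfl e]
    exact h
  loopless := by
    constructor
    intro x h
    simp at h

/-!
Mesh distance in an induced subgraph dominates L¹ distance `d`, so it suffices to bound finite
sets `A ⊆ ℤ^k` of L¹-diameter at most `2p`; we induct on `k`. Project `A` onto the last `k - 1`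
coordinates, with image `B`, and let `m x` be the size of the fibre over `x`. A fibre is a set of
integers, so comparing extreme points of two fibres gives `2 d(x, y) + m x + m y ≤ 4p + 2`.
Let `L j = {x ∈ B | j < m x}`, so that `|A| = ∑_{j ≤ 2p} |L j|`, and `L 0` has diameter at most
`2p`. For `1 ≤ r ≤ p`, `L (2r - 1)` has diameter at most `2(p - r) + 1`, and points of `L (2r)`
are within `2(p - r)` of all of it. Since `d` has the parity of the difference of coordinate sums,
each parity class of `L (2r - 1)` together with `L (2r)` has diameter at most `2(p - r)`, whence
`|L (2r - 1)| + |L (2r)| ≤ 2 f(k - 1, p - r)`. Slicing the ball along the first coordinate gives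
`f(k, p) = f(k - 1, p) + 2 ∑_{r=1}^{p} f(k - 1, p - r)`.
-/

open Finset

section L1

variable {ι : Type*} [Fintype ι]

def l1Dist (x y : ι → ℤ) : ℤ := ∑ i, |x i - y i|

theorem l1Dist_self (x : ι → ℤ) : l1Dist x x = 0 := by
  simp [l1Dist]

theorem l1Dist_comm (x y : ι → ℤ) : l1Dist x y = l1Dist y x := by
  simp only [l1Dist, abs_sub_comm]

theorem l1Dist_triangle (x y z : ι → ℤ) : l1Dist x z ≤ l1Dist x y + l1Dist y z := by
  rw [l1Dist, l1Dist, l1Dist, ← sum_add_distrib]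
  exact sum_le_sum fun i _ => abs_sub_le _ _ _

theorem l1Dist_modEq_two (x y : ι → ℤ) : l1Dist x y ≡ ∑ i, x i - ∑ i, y i [ZMOD 2] := by
  rw [Int.ModEq, l1Dist, sum_int_mod, ← sum_sub_distrib, sum_int_mod _ 2 (fun i => x i - y i)]
  congr 1
  refine sum_congr rfl fun i _ => ?_
  rcases abs_choice (x i - y i) with h | h <;> omega

end L1

theorem l1Dist_cons {k : ℕ} (s t : ℤ) (x y : Fin k → ℤ) :
    l1Dist (Fin.cons s x : Fin (k + 1) → ℤ) (Fin.cons t y) = |s - t| + l1Dist x y :=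
  Fin.sum_univ_succ _

theorem l1Dist_le_length {k : ℕ} {x y : Fin k → ℤ} (w : (mesh k).Walk x y) :
    l1Dist x y ≤ w.length := by
  induction w with
  | nil => simp [l1Dist_self]
  | @cons x z y hxz _ ih =>
    have hxz : l1Dist x z = 1 := hxz
    rw [SimpleGraph.Walk.length_cons, Nat.cast_succ]
    linarith [l1Dist_triangle x z y]

theorem l1Dist_le_dist_induce {k : ℕ} {S : Set (Fin k → ℤ)} {x y : S}
    (h : ((mesh k).induce S).Reachable x y) :
    l1Dist x.1 y.1 ≤ ((mesh k).induce S).dist x y := by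
  obtain ⟨w, hw⟩ := h.exists_walk_length_eq_dist
  have h := l1Dist_le_length (w.map (SimpleGraph.Embedding.induce S).toHom)
  rwa [SimpleGraph.Walk.length_map, hw] at h

noncomputable def ballFinset (k p : ℕ) : Finset (Fin k → ℤ) :=
  {x ∈ Fintype.piFinset fun _ => Icc (-(p : ℤ)) p | ∑ i, |x i| ≤ p}

theorem mem_ballFinset {k p : ℕ} {x : Fin k → ℤ} : x ∈ ballFinset k p ↔ ∑ i, |x i| ≤ p := by
  refine ⟨fun h => (mem_filter.1 h).2,
    fun h => mem_filter.2 ⟨Fintype.mem_piFinset.2 fun i => ?_, h⟩⟩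
  exact mem_Icc.2 (abs_le.1 ((single_le_sum (fun j _ => abs_nonneg (x j)) (mem_univ i)).trans h))

theorem latticeBall_eq_card (k p : ℕ) : latticeBall k p = #(ballFinset k p) := by
  rw [latticeBall, ← Set.ncard_coe_finset]
  congr 1
  ext x
  simp [mem_ballFinset]

theorem latticeBall_zero (p : ℕ) : latticeBall 0 p = 1 := by
  rw [latticeBall_eq_card, card_eq_one]
  exact ⟨0, eq_singleton_iff_unique_mem.2
    ⟨by simp [mem_ballFinset], fun _ _ => Subsingleton.elim _ _⟩⟩

theorem card_ballFinset_succ (k p : ℕ) :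
    #(ballFinset (k + 1) p) = ∑ t ∈ Icc (-(p : ℤ)) p, latticeBall k (p - t.natAbs) := by
  rw [card_eq_sum_card_fiberwise (f := fun x => x 0) fun x hx => ?_]
  · refine sum_congr rfl fun t ht => ?_
    have hle : |t| ≤ p := abs_le.2 (mem_Icc.1 ht)
    have hcast : ((p - t.natAbs : ℕ) : ℤ) = p - |t| := by
      rw [Nat.cast_sub (by rwa [← Int.ofNat_le, Int.natCast_natAbs]), Int.natCast_natAbs]
    rw [latticeBall_eq_card]
    refine card_nbij' Fin.tail (fun y => Fin.cons t y) (fun x hx => ?_) (fun y hy => ?_)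
      (fun x hx => ?_) (fun y _ => Fin.tail_cons _ _)
    · obtain ⟨hxB, rfl⟩ := mem_filter.1 hx
      rw [mem_ballFinset, Fin.sum_univ_succ] at hxB
      rw [mem_coe, mem_ballFinset, hcast]
      simp only [Fin.tail]
      linarith
    · rw [mem_coe, mem_ballFinset, hcast] at hy
      rw [mem_coe, mem_filter, mem_ballFinset, Fin.sum_univ_succ]
      simp only [Fin.cons_zero, Fin.cons_succ, and_true]
      linarith
    · obtain ⟨-, rfl⟩ := mem_filter.1 hx
      exact Fin.cons_self_tail x
  · simpa using abs_le.1 ((single_le_sum (fun j _ => abs_nonneg (x j)) (mem_univ 0)).trans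
      (mem_ballFinset.1 hx))

theorem latticeBall_succ (k p : ℕ) :
    latticeBall (k + 1) p = latticeBall k p + ∑ r ∈ range p, 2 * latticeBall k (p - (r + 1)) := by
  have hnat (r : ℕ) : ((r + 1 : ℕ) : ℤ).natAbs = r + 1 := Int.natAbs_natCast _
  zify
  rw [latticeBall_eq_card, card_ballFinset_succ, Nat.cast_sum,
    sum_Icc_of_even_eq_range (fun t => by simp), sum_range_succ']
  simp only [hnat, Nat.cast_zero, Int.natAbs_zero, Nat.sub_zero, ← mul_sum]
  ring

theorem card_add_card_le_of_abs_sub_le {F G : Finset ℤ} (hF : F.Nonempty) (hG : G.Nonempty)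
    {D : ℤ} (h : ∀ s ∈ F, ∀ t ∈ G, |s - t| ≤ D) : (#F + #G : ℤ) ≤ 2 * D + 2 := by
  have hspan (E : Finset ℤ) (hE : E.Nonempty) : (#E : ℤ) ≤ E.max' hE - E.min' hE + 1 := by
    have hsub : E ⊆ Icc (E.min' hE) (E.max' hE) := fun t ht =>
      mem_Icc.2 ⟨E.min'_le t ht, E.le_max' t ht⟩
    have := card_le_card hsub
    rw [Int.card_Icc] at this
    have := E.min'_le _ (E.max'_mem hE)
    omega
  have h1 := abs_le.1 (h _ (F.max'_mem hF) _ (G.min'_mem hG))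
  have h2 := abs_le.1 (h _ (F.min'_mem hF) _ (G.max'_mem hG))
  linarith [hspan F hF, hspan G hG]

theorem sum_eq_sum_range_card_filter_lt {α : Type*} (s : Finset α) (f : α → ℕ) {n : ℕ}
    (h : ∀ x ∈ s, f x ≤ n) : ∑ x ∈ s, f x = ∑ j ∈ range n, #{x ∈ s | j < f x} := by
  simp only [card_filter]
  rw [sum_comm]
  refine sum_congr rfl fun x hx => ?_
  have hlt : {j ∈ range n | j < f x} = range (f x) := by
    ext j
    simp only [mem_range, mem_filter]
    have := h x hx
    omega
  rw [← card_filter, hlt, card_range]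

theorem sum_range_two_mul_add_one {M : Type*} [AddCommMonoid M] (g : ℕ → M) (p : ℕ) :
    ∑ j ∈ range (2 * p + 1), g j = g 0 + ∑ r ∈ range p, (g (2 * r + 1) + g (2 * r + 2)) := by
  induction p with
  | zero => simp
  | succ p ih =>
    rw [show 2 * (p + 1) + 1 = 2 * p + 1 + 1 + 1 by ring, sum_range_succ, sum_range_succ, ih,
      sum_range_succ, add_assoc, add_assoc]

theorem card_add_card_le_of_l1Dist_le {ι : Type*} [Fintype ι] [DecidableEq ι]
    {U V : Finset (ι → ℤ)} {q N : ℕ} (hUV : U ⊆ V)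
    (hV : ∀ x ∈ V, ∀ y ∈ V, l1Dist x y ≤ 2 * q + 1)
    (hU : ∀ x ∈ U, ∀ y ∈ V, l1Dist x y ≤ 2 * q)
    (hN : ∀ B ⊆ V, (∀ x ∈ B, ∀ y ∈ B, l1Dist x y ≤ 2 * q) → #B ≤ N) :
    #V + #U ≤ 2 * N := by
  have hpart (C : Finset (ι → ℤ)) (hCV : C ⊆ V)
      (hC : ∀ x ∈ C, ∀ y ∈ C, (∑ i, x i) % 2 = (∑ i, y i) % 2) : #(C ∪ U) ≤ N := by
    refine hN _ (union_subset hCV hUV) fun x hx y hy => ?_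
    rcases mem_union.1 hx with hx | hx
    · rcases mem_union.1 hy with hy | hy
      · have hd := hV x (hCV hx) y (hCV hy)
        have hpar := l1Dist_modEq_two x y
        have hxy := hC x hx y hy
        rw [Int.ModEq] at hpar
        omega
      · rw [l1Dist_comm]
        exact hU y hy x (hCV hx)
    · exact hU x hx y ((mem_union.1 hy).elim (hCV ·) (hUV ·))
  set P : Finset (ι → ℤ) := {x ∈ V | (∑ i, x i) % 2 = 0}
  set Q : Finset (ι → ℤ) := {x ∈ V | ¬(∑ i, x i) % 2 = 0}
  have hP := hpart P (filter_subset _ _) fun x hx y hy => by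
    rw [(mem_filter.1 hx).2, (mem_filter.1 hy).2]
  have hQ := hpart Q (filter_subset _ _) fun x hx y hy => by
    have := (mem_filter.1 hx).2
    have := (mem_filter.1 hy).2
    omega
  have hunion : (P ∪ U) ∪ (Q ∪ U) = V := by
    rw [union_union_union_comm, filter_union_filter_not_eq, union_self, union_eq_left.2 hUV]
  have hinter : (P ∪ U) ∩ (Q ∪ U) = U := by
    rw [← inter_union_distrib_right,
      disjoint_iff_inter_eq_empty.1 (disjoint_filter_filter_not V V _), empty_union]
  have := card_union_add_card_inter (P ∪ U) (Q ∪ U)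
  rw [hunion, hinter] at this
  omega

section Fiber

variable {k : ℕ}

noncomputable def consFiber (A : Finset (Fin (k + 1) → ℤ)) (x : Fin k → ℤ) : Finset ℤ :=
  A.preimage (fun t => Fin.cons t x) (Fin.cons_left_injective (α := fun _ => ℤ) x).injOn

theorem mem_consFiber {A : Finset (Fin (k + 1) → ℤ)} {x : Fin k → ℤ} {t : ℤ} :
    t ∈ consFiber A x ↔ Fin.cons t x ∈ A := by
  rw [consFiber, mem_preimage]

theorem consFiber_nonempty {A : Finset (Fin (k + 1) → ℤ)} {x : Fin k → ℤ}
    (hx : x ∈ A.image Fin.tail) : (consFiber A x).Nonempty := by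
  obtain ⟨a, ha, rfl⟩ := mem_image.1 hx
  exact ⟨a 0, mem_consFiber.2 ((Fin.cons_self_tail a).symm ▸ ha)⟩

theorem card_eq_sum_card_consFiber (A : Finset (Fin (k + 1) → ℤ)) :
    #A = ∑ x ∈ A.image Fin.tail, #(consFiber A x) := by
  rw [card_eq_sum_card_image Fin.tail A]
  refine sum_congr rfl fun x _ => card_nbij' (· 0) (fun t => Fin.cons t x) (fun a ha => ?_)
    (fun t ht => ?_) (fun a ha => ?_) (fun t _ => Fin.cons_zero _ _)
  · obtain ⟨ha, rfl⟩ := mem_filter.1 ha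
    rwa [mem_coe, mem_consFiber, Fin.cons_self_tail]
  · exact mem_filter.2 ⟨mem_consFiber.1 ht, Fin.tail_cons _ _⟩
  · obtain ⟨-, rfl⟩ := mem_filter.1 ha
    exact Fin.cons_self_tail a

theorem two_mul_l1Dist_add_card_consFiber_le {A : Finset (Fin (k + 1) → ℤ)} {p : ℕ}
    (hA : ∀ a ∈ A, ∀ b ∈ A, l1Dist a b ≤ 2 * p) {x y : Fin k → ℤ}
    (hx : x ∈ A.image Fin.tail) (hy : y ∈ A.image Fin.tail) :
    2 * l1Dist x y + #(consFiber A x) + #(consFiber A y) ≤ 4 * p + 2 := by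
  have := card_add_card_le_of_abs_sub_le (consFiber_nonempty hx) (consFiber_nonempty hy)
    (D := 2 * p - l1Dist x y) fun s hs t ht => by
      have := hA _ (mem_consFiber.1 hs) _ (mem_consFiber.1 ht)
      rw [l1Dist_cons] at this
      linarith
  linarith

end Fiber

theorem card_le_latticeBall_of_l1Dist_le (k p : ℕ) (A : Finset (Fin k → ℤ))
    (hA : ∀ x ∈ A, ∀ y ∈ A, l1Dist x y ≤ 2 * p) : #A ≤ latticeBall k p := by
  induction k generalizing p with
  | zero => exact (card_le_one_of_subsingleton A).trans (latticeBall_zero p).ge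
  | succ k ih =>
    set B := A.image Fin.tail
    set m : (Fin k → ℤ) → ℕ := fun x => #(consFiber A x)
    have hm (x) (hx : x ∈ B) : m x ≤ 2 * p + 1 := by
      have : 2 * l1Dist x x + m x + m x ≤ 4 * p + 2 :=
        two_mul_l1Dist_add_card_consFiber_le hA hx hx
      rw [l1Dist_self] at this
      omega
    have hlevel {i j : ℕ} {x y : Fin k → ℤ} (hx : x ∈ {x ∈ B | i < m x})
        (hy : y ∈ {y ∈ B | j < m y}) : 2 * l1Dist x y + i + j ≤ 4 * p := by
      obtain ⟨hxB, hix⟩ := mem_filter.1 hx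
      obtain ⟨hyB, hjy⟩ := mem_filter.1 hy
      have : 2 * l1Dist x y + m x + m y ≤ 4 * p + 2 :=
        two_mul_l1Dist_add_card_consFiber_le hA hxB hyB
      omega
    have hlevel0 : #{x ∈ B | 0 < m x} ≤ latticeBall k p :=
      ih p _ fun x hx y hy => by linarith [hlevel hx hy]
    have hlevels (r) (hr : r ∈ range p) :
        #{x ∈ B | 2 * r + 1 < m x} + #{x ∈ B | 2 * r + 2 < m x}
          ≤ 2 * latticeBall k (p - (r + 1)) := by
      have hr := mem_range.1 hr
      refine card_add_card_le_of_l1Dist_le (monotone_filter_right _ fun x h => by omega)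
        (fun x hx y hy => ?_) (fun x hx y hy => ?_) (fun C _ hC => ih _ C hC) <;>
      · have := hlevel hx hy
        omega
    calc #A = ∑ x ∈ B, m x := card_eq_sum_card_consFiber A
      _ = ∑ j ∈ range (2 * p + 1), #{x ∈ B | j < m x} := sum_eq_sum_range_card_filter_lt _ _ hm
      _ = #{x ∈ B | 0 < m x}
          + ∑ r ∈ range p, (#{x ∈ B | 2 * r + 1 < m x} + #{x ∈ B | 2 * r + 2 < m x}) :=
        sum_range_two_mul_add_one _ p
      _ ≤ latticeBall k p + ∑ r ∈ range p, 2 * latticeBall k (p - (r + 1)) :=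
        add_le_add hlevel0 (sum_le_sum hlevels)
      _ = latticeBall (k + 1) p := (latticeBall_succ k p).symm

theorem card_le_ball_of_even_diameter_general (k p : ℕ) (S : Set (Fin k → ℤ))
    (hfin : S.Finite)
    (hconn : ((mesh k).induce S).Connected)
    (hdiam : ∀ x, ∀ hx : x ∈ S, ∀ y, ∀ hy : y ∈ S,
      ((mesh k).induce S).dist ⟨x, hx⟩ ⟨y, hy⟩ ≤ 2 * p) :
    S.ncard ≤ latticeBall k p := by
  rw [Set.ncard_eq_toFinset_card S hfin]
  refine card_le_latticeBall_of_l1Dist_le k p _ fun x hx y hy => ?_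
  rw [Set.Finite.mem_toFinset] at hx hy
  calc l1Dist x y ≤ ((mesh k).induce S).dist ⟨x, hx⟩ ⟨y, hy⟩ :=
        l1Dist_le_dist_induce (hconn.preconnected _ _)
    _ ≤ 2 * p := by exact_mod_cast hdiam x hx y hy

/-- For all `k ≥ 1` and `p ≥ 0`, every finite nonempty `S ⊆ ℤ^k` inducing
a connected subgraph of the `k`-dimensional mesh in which any two vertices are at graph
distance at most `2p` satisfies `|S| ≤ f(k,p)`. -/
theorem card_le_ball_of_even_diameter (k p : ℕ) (hk : 1 ≤ k) (S : Set (Fin k → ℤ))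
    (hfin : S.Finite) (hne : S.Nonempty)
    (hconn : ((mesh k).induce S).Connected)
    (hdiam : ∀ x, ∀ hx : x ∈ S, ∀ y, ∀ hy : y ∈ S,
      ((mesh k).induce S).dist ⟨x, hx⟩ ⟨y, hy⟩ ≤ 2 * p) :
    S.ncard ≤ latticeBall k p :=
  card_le_ball_of_even_diameter_general k p S hfin hconn hdiam
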